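/- arXiv:2304.02928 — 7 statements merged into one kernel-verified Lean document; each statement's English description precedes it below -/
import Mathlib

section
/- A dagger functor F between dagger categories is an equivalence in the 2-category of dagger categories (i.e., it admits a dagger inverse up to unitary natural isomorphism) if and only if F is fully faithful and for every object d of the codomain there exists an object c of the domain such that F(c) is unitarily isomorphic to d. -/
open CategoryTheory

universe v u v₂ u₂ v₃ u₃

/-- A dagger structure on a category: a contravariant, identity-on-objects involution. -/
structure DaggerStruct (C : Type u) [Category.{v} C] where
  dag : ∀ {x y : C}, (x ⟶ y) → (y ⟶ x)
  dag_id : ∀ x : C, dag (𝟙 x) = 𝟙 x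
  dag_comp : ∀ {x y z : C} (f : x ⟶ y) (g : y ⟶ z), dag (f ≫ g) = dag g ≫ dag f
  dag_dag : ∀ {x y : C} (f : x ⟶ y), dag (dag f) = f

variable {C : Type u} [Category.{v} C] {D : Type u₂} [Category.{v₂} D] {E : Type u₃} [Category.{v₃} E]

/-- `f` is an isometry: `f† ∘ f = id`. -/
def DaggerStruct.Isometry (DC : DaggerStruct C) {x y : C} (f : x ⟶ y) : Prop :=
  f ≫ DC.dag f = 𝟙 x

/-- `f` is unitary: `f†` is a two-sided inverse of `f`. -/
def DaggerStruct.Unitary (DC : DaggerStruct C) {x y : C} (f : x ⟶ y) : Prop :=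
  f ≫ DC.dag f = 𝟙 x ∧ DC.dag f ≫ f = 𝟙 y

/-- A functor between dagger categories is a dagger functor if it preserves daggers. -/
def IsDaggerFunctor (DC : DaggerStruct C) (DD : DaggerStruct D) (F : C ⥤ D) : Prop :=
  ∀ {x y : C} (f : x ⟶ y), F.map (DC.dag f) = DD.dag (F.map f)

/-- An anti-involutive category structure: a contravariant functor `d` together with a
natural isomorphism `η : Id ≅ d ∘ d` such that `η_{d c}` and `d(η_c)` are mutually inverse. -/
structure AntiInv (C : Type u) [Category.{v} C] where
  dObj : C → C
  dMap : ∀ {x y : C}, (x ⟶ y) → (dObj y ⟶ dObj x)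
  dMap_id : ∀ x : C, dMap (𝟙 x) = 𝟙 (dObj x)
  dMap_comp : ∀ {x y z : C} (f : x ⟶ y) (g : y ⟶ z), dMap (f ≫ g) = dMap g ≫ dMap f
  η : ∀ c : C, c ≅ dObj (dObj c)
  η_natural : ∀ {x y : C} (f : x ⟶ y), f ≫ (η y).hom = (η x).hom ≫ dMap (dMap f)
  η_coh : ∀ c : C, dMap (η c).hom = (η (dObj c)).inv

/-- The anti-involutive category underlying a dagger category (`T` in the paper). -/
def DaggerStruct.toAntiInv (DC : DaggerStruct C) : AntiInv C where
  dObj c := c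
  dMap f := DC.dag f
  dMap_id := DC.dag_id
  dMap_comp := DC.dag_comp
  η c := Iso.refl c
  η_natural f := by simp [DC.dag_dag]
  η_coh c := by simp [DC.dag_id]

/-- An involutive functor between anti-involutive categories. -/
structure InvolFunctor (A₁ : AntiInv C) (A₂ : AntiInv D) where
  F : C ⥤ D
  φ : ∀ x : C, F.obj (A₁.dObj x) ≅ A₂.dObj (F.obj x)
  φ_natural : ∀ {x y : C} (f : x ⟶ y),
    F.map (A₁.dMap f) ≫ (φ x).hom = (φ y).hom ≫ A₂.dMap (F.map f)
  φ_coh : ∀ x : C,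
    (A₂.η (F.obj x)).hom ≫ A₂.dMap (φ x).hom = F.map (A₁.η x).hom ≫ (φ (A₁.dObj x)).hom

/-- The condition for a natural transformation between (the underlying functors of) involutive
functors with involutive data `φF`, `φG` to be an involutive natural transformation. -/
def InvolCond (A₁ : AntiInv C) (A₂ : AntiInv D) {F G : C ⥤ D}
    (φF : ∀ x : C, F.obj (A₁.dObj x) ⟶ A₂.dObj (F.obj x))
    (φG : ∀ x : C, G.obj (A₁.dObj x) ⟶ A₂.dObj (G.obj x))
    (α : F ⟶ G) : Prop :=
  ∀ x : C, α.app (A₁.dObj x) ≫ φG x ≫ A₂.dMap (α.app x) = φF x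

/-- Objects of the Hermitian completion: Hermitian fixed points `(c, h)`. -/
structure HermObj (A : AntiInv C) where
  c : C
  h : c ≅ A.dObj c
  fix : (A.η c).hom ≫ A.dMap h.hom = h.hom

instance (A : AntiInv C) : Category (HermObj A) where
  Hom X Y := X.c ⟶ Y.c
  id X := 𝟙 X.c
  comp f g := f ≫ g

/-- The adjoint (dagger) in the Hermitian completion: `f† = h₁⁻¹ ∘ d(f) ∘ h₂`. -/
def hermDag (A : AntiInv C) {X Y : HermObj A} (f : X ⟶ Y) : Y ⟶ X :=
  show Y.c ⟶ X.c from Y.h.hom ≫ A.dMap (show X.c ⟶ Y.c from f) ≫ X.h.inv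

/-- A morphism of the Hermitian completion is unitary if its adjoint is a two-sided inverse. -/
def HermUnitary (A : AntiInv C) {X Y : HermObj A} (f : X ⟶ Y) : Prop :=
  f ≫ hermDag A f = 𝟙 X ∧ hermDag A f ≫ f = 𝟙 Y

theorem HermObj.dMap_hom (A : AntiInv C) (X : HermObj A) :
    A.dMap X.h.hom = (A.η X.c).inv ≫ X.h.hom := by
  conv_rhs => rw [← X.fix]
  simp

theorem HermObj.dMap_inv (A : AntiInv C) (X : HermObj A) :
    A.dMap X.h.inv = X.h.inv ≫ (A.η X.c).hom := by
  have h1 : A.dMap X.h.inv ≫ A.dMap X.h.hom = 𝟙 (A.dObj X.c) := by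
    rw [← A.dMap_comp, X.h.hom_inv_id, A.dMap_id]
  have h2 : A.dMap X.h.hom ≫ X.h.inv ≫ (A.η X.c).hom = 𝟙 (A.dObj (A.dObj X.c)) := by
    rw [HermObj.dMap_hom]
    simp
  calc A.dMap X.h.inv = A.dMap X.h.inv ≫ A.dMap X.h.hom ≫ X.h.inv ≫ (A.η X.c).hom := by
        rw [h2, Category.comp_id]
    _ = (A.dMap X.h.inv ≫ A.dMap X.h.hom) ≫ X.h.inv ≫ (A.η X.c).hom := by rw [Category.assoc]
    _ = X.h.inv ≫ (A.η X.c).hom := by rw [h1, Category.id_comp]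

/-- The Hermitian completion is a dagger category. -/
def hermDaggerStruct (A : AntiInv C) : DaggerStruct (HermObj A) where
  dag f := hermDag A f
  dag_id X := by
    show X.h.hom ≫ A.dMap (𝟙 X.c) ≫ X.h.inv = 𝟙 X.c
    rw [A.dMap_id]
    simp
  dag_comp {X Y Z} f g := by
    show Z.h.hom ≫ A.dMap ((f ≫ g : X.c ⟶ Z.c)) ≫ X.h.inv =
      (Z.h.hom ≫ A.dMap g ≫ Y.h.inv) ≫ (Y.h.hom ≫ A.dMap f ≫ X.h.inv)
    rw [A.dMap_comp]
    simp
  dag_dag {X Y} f := by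
    show X.h.hom ≫ A.dMap ((Y.h.hom ≫ A.dMap f ≫ X.h.inv : Y.c ⟶ X.c)) ≫ Y.h.inv = f
    rw [A.dMap_comp, A.dMap_comp, HermObj.dMap_inv, HermObj.dMap_hom]
    simp only [Category.assoc, Iso.hom_inv_id_assoc, Iso.inv_hom_id, Category.comp_id,
      Iso.hom_inv_id, Iso.inv_hom_id_assoc]
    rw [← Category.assoc, ← A.η_natural, Category.assoc, Iso.hom_inv_id, Category.comp_id]

/-- The forgetful functor `K : Herm(C) → C`. -/
def Kfun (A : AntiInv C) : HermObj A ⥤ C where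
  obj X := X.c
  map f := f

/-- The functor `U : D → Herm(T(D))`, `x ↦ (x, id)`. -/
def Ufun (DC : DaggerStruct C) : C ⥤ HermObj DC.toAntiInv where
  obj x := ⟨x, Iso.refl x, by simp [DaggerStruct.toAntiInv, DC.dag_id]⟩
  map f := f

/-- A dagger category is indefinite if every self-adjoint automorphism `a = a†` is of the form
`f† ∘ f` for some isomorphism `f`. -/
def DaggerStruct.Indefinite (DC : DaggerStruct C) : Prop :=
  ∀ (x : C) (a : x ⟶ x), IsIso a → DC.dag a = a →
    ∃ (y : C) (f : x ⟶ y), IsIso f ∧ f ≫ DC.dag f = a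

/-- The anti-involution `F ↦ d_D ∘ F ∘ d_C` on the functor category, on objects. -/
def dFun (A₁ : AntiInv C) (A₂ : AntiInv D) (F : C ⥤ D) : C ⥤ D where
  obj c := A₂.dObj (F.obj (A₁.dObj c))
  map f := A₂.dMap (F.map (A₁.dMap f))
  map_id c := by (try dsimp only); rw [A₁.dMap_id, F.map_id, A₂.dMap_id]
  map_comp f g := by (try dsimp only); rw [A₁.dMap_comp, F.map_comp, A₂.dMap_comp]

/-- The anti-involution on the functor category, on natural transformations (whiskering). -/
def dNat (A₁ : AntiInv C) (A₂ : AntiInv D) {F G : C ⥤ D} (α : F ⟶ G) :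
    dFun A₁ A₂ G ⟶ dFun A₁ A₂ F where
  app c := A₂.dMap (α.app (A₁.dObj c))
  naturality x y f := by
    dsimp [dFun]
    rw [← A₂.dMap_comp, ← A₂.dMap_comp, α.naturality]

/-- The component at `c` of the structure map `η_F : F ⟶ d(d(F))` of the anti-involution on
the functor category: the horizontal composite `η_D ∗ id_F ∗ η_C`. -/
def ηApp (A₁ : AntiInv C) (A₂ : AntiInv D) (F : C ⥤ D) (c : C) :
    F.obj c ⟶ (dFun A₁ A₂ (dFun A₁ A₂ F)).obj c :=
  F.map (A₁.η c).hom ≫ (A₂.η (F.obj (A₁.dObj (A₁.dObj c)))).hom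

/-- The data of an involutive structure on a functor `F`. -/
structure InvolData (A₁ : AntiInv C) (A₂ : AntiInv D) (F : C ⥤ D) where
  φ : ∀ x : C, F.obj (A₁.dObj x) ⟶ A₂.dObj (F.obj x)
  iso : ∀ x : C, IsIso (φ x)
  natural : ∀ {x y : C} (f : x ⟶ y), F.map (A₁.dMap f) ≫ φ x = φ y ≫ A₂.dMap (F.map f)
  coh : ∀ x : C, (A₂.η (F.obj x)).hom ≫ A₂.dMap (φ x) = F.map (A₁.η x).hom ≫ φ (A₁.dObj x)

/-- The candidate involutive structure on the inverse `G` of an involutive adjoint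
equivalence `(F, φ)`: `ψ_y = β_{dGy} ∘ G(φ_{Gy}⁻¹) ∘ G(d(α_y))`. -/
def invPsi (A₁ : AntiInv C) (A₂ : AntiInv D) (P : InvolFunctor A₁ A₂) (G : D ⥤ C)
    (α : G ⋙ P.F ≅ 𝟭 D) (β : P.F ⋙ G ≅ 𝟭 C) (y : D) :
    G.obj (A₂.dObj y) ⟶ A₁.dObj (G.obj y) :=
  G.map (A₂.dMap (α.hom.app y)) ≫ G.map (P.φ (G.obj y)).inv ≫ β.hom.app (A₁.dObj (G.obj y))

/-- A notion of positivity on an anti-involutive category. -/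
structure PositivityNotion (A : AntiInv C) where
  P : ∀ c : C, Set (c ⟶ A.dObj c)
  nonempty : ∀ c : C, (P c).Nonempty
  isFP : ∀ (c : C), ∀ h ∈ P c, IsIso h ∧ (A.η c).hom ≫ A.dMap h = h
  transfer : ∀ {c c' : C} (g : c' ⟶ c), IsIso g → ∀ h ∈ P c, (g ≫ h ≫ A.dMap g) ∈ P c'

/-- Unitary-isomorphism relation on the Hermitian completion. -/
def unitaryRel (A : AntiInv C) (X Y : HermObj A) : Prop :=
  ∃ u : X ⟶ Y, HermUnitary A u

/-- Unitary isomorphism classes of objects of `Herm(C)`. -/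
def pi0U (A : AntiInv C) : Type _ := Quot (unitaryRel A)

/-- Isomorphism classes of objects of a category. -/
def pi0 (C : Type u) [Category.{v} C] : Type _ := Quot (fun x y : C => Nonempty (x ≅ y))

/-- The forgetful map `π₀ᵁ(Herm C) → π₀(C)`. -/
def toPi0 (A : AntiInv C) : pi0U A → pi0 C :=
  Quot.lift (fun X => Quot.mk _ X.c) (by
    rintro X Y ⟨u, h1, h2⟩
    exact Quot.sound ⟨⟨u, hermDag A u, h1, h2⟩⟩)


/-- A dagger functor between dagger categories is an equivalence in the
2-category of dagger categories iff it is fully faithful and surjective up to unitaries. -/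
theorem stmt0 (DC : DaggerStruct C) (DD : DaggerStruct D) (F : C ⥤ D)
    (hF : IsDaggerFunctor DC DD F) :
    (∃ G : D ⥤ C, IsDaggerFunctor DD DC G ∧
      ∃ (α : F ⋙ G ≅ 𝟭 C) (β : G ⋙ F ≅ 𝟭 D),
        (∀ x : C, DC.Unitary (α.hom.app x)) ∧ (∀ y : D, DD.Unitary (β.hom.app y))) ↔
    (F.Full ∧ F.Faithful ∧ ∀ d : D, ∃ (c : C) (u : F.obj c ⟶ d), DD.Unitary u) := by
  constructor
  · rintro ⟨G, hG, α, β, hα, hβ⟩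
    haveI : F.IsEquivalence := (CategoryTheory.Equivalence.mk F G α.symm β).isEquivalence_functor
    exact ⟨inferInstance, inferInstance, fun d => ⟨G.obj d, β.hom.app d, hβ d⟩⟩
  · rintro ⟨hFull, hFaith, hsurj⟩
    haveI := hFull; haveI := hFaith
    choose c u hu using hsurj
    let G : D ⥤ C :=
      { obj := c
        map := fun {d d'} f => F.preimage (u d ≫ f ≫ DD.dag (u d'))
        map_id := fun d => F.map_injective (by
          rw [F.map_preimage, F.map_id, Category.id_comp]; exact (hu d).1)
        map_comp := fun {d d' d''} f g => F.map_injective (by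
          rw [F.map_preimage, F.map_comp, F.map_preimage, F.map_preimage]
          slice_rhs 3 4 => rw [(hu d').2]
          simp) }
    have hGmap : ∀ {d d' : D} (f : d ⟶ d'),
        F.map (G.map f) = u d ≫ f ≫ DD.dag (u d') := fun f => F.map_preimage _
    refine ⟨G, ?_, ?_⟩
    · intro d d' f
      apply F.map_injective
      rw [hGmap, hF, hGmap, DD.dag_comp, DD.dag_comp, DD.dag_dag, Category.assoc]
    · refine ⟨NatIso.ofComponents
        (fun x => ⟨F.preimage (u (F.obj x)), F.preimage (DD.dag (u (F.obj x))),
          F.map_injective (by rw [F.map_comp, F.map_preimage, F.map_preimage, F.map_id]; exact (hu (F.obj x)).1),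
          F.map_injective (by rw [F.map_comp, F.map_preimage, F.map_preimage, F.map_id]; exact (hu (F.obj x)).2)⟩)
        (fun {x y} f => F.map_injective (by
          simp only [F.map_comp]
          rw [Functor.comp_map, Functor.id_map, hGmap,
            F.map_preimage, F.map_preimage, Category.assoc, Category.assoc,
            (hu (F.obj y)).2, Category.comp_id])),
        NatIso.ofComponents (fun d => ⟨u d, DD.dag (u d), (hu d).1, (hu d).2⟩)
          (fun {d d'} f => by
            show F.map (G.map f) ≫ u d' = u d ≫ f
            rw [hGmap, Category.assoc, Category.assoc, (hu d').2, Category.comp_id]),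
        ?_, ?_⟩
      · intro x
        constructor
        · apply F.map_injective
          rw [F.map_comp, hF]
          simp only [NatIso.ofComponents_hom_app, F.map_preimage, F.map_id]
          exact (hu (F.obj x)).1
        · apply F.map_injective
          rw [F.map_comp, hF]
          simp only [NatIso.ofComponents_hom_app, F.map_preimage, F.map_id]
          exact (hu (F.obj x)).2
      · intro d
        exact hu d
end

section
/- An involutive functor (F, φ): (C₁, d₁, η₁) → (C₂, d₂, η₂) is an equivalence in the 2-category of anti-involutive categories (i.e., admits an involutive inverse up to involutive natural isomorphism) if and only if the underlying functor F is an equivalence of categories. -/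
open CategoryTheory

universe v u v₂ u₂ v₃ u₃

variable {C : Type u} [Category.{v} C] {D : Type u₂} [Category.{v₂} D] {E : Type u₃} [Category.{v₃} E]

/-- The contravariant action of an anti-involution on isomorphisms. -/
def AntiInv.dIso (A : AntiInv C) {x y : C} (i : x ≅ y) : A.dObj y ≅ A.dObj x where
  hom := A.dMap i.hom
  inv := A.dMap i.inv
  hom_inv_id := by rw [← A.dMap_comp, i.inv_hom_id, A.dMap_id]
  inv_hom_id := by rw [← A.dMap_comp, i.hom_inv_id, A.dMap_id]

theorem invol_equiv_aux (A₁ : AntiInv C) (A₂ : AntiInv D) (P : InvolFunctor A₁ A₂)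
    (G : D ⥤ C) (u : 𝟭 C ≅ P.F ⋙ G) (ε : G ⋙ P.F ≅ 𝟭 D)
    (tri : ∀ x : C, P.F.map (u.hom.app x) ≫ ε.hom.app (P.F.obj x) = 𝟙 (P.F.obj x)) :
    ∃ (Q : InvolFunctor A₂ A₁) (α : P.F ⋙ Q.F ≅ 𝟭 C) (β : Q.F ⋙ P.F ≅ 𝟭 D),
      InvolCond A₁ A₁ (F := P.F ⋙ Q.F) (G := 𝟭 C)
        (fun x => Q.F.map (P.φ x).hom ≫ (Q.φ (P.F.obj x)).hom)
        (fun x => 𝟙 (A₁.dObj x)) α.hom ∧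
      InvolCond A₂ A₂ (F := Q.F ⋙ P.F) (G := 𝟭 D)
        (fun y => P.F.map (Q.φ y).hom ≫ (P.φ (Q.F.obj y)).hom)
        (fun y => 𝟙 (A₂.dObj y)) β.hom := by
  -- faithfulness of F
  have hnat : ∀ {x x' : C} (f : x ⟶ x'),
      f = u.hom.app x ≫ G.map (P.F.map f) ≫ u.inv.app x' := by
    intro x x' f
    have h := u.hom.naturality f
    simp only [Functor.id_map, Functor.comp_map] at h
    rw [← Category.assoc, ← h]
    simp
  have hfaith : ∀ {x x' : C} (f g : x ⟶ x'), P.F.map f = P.F.map g → f = g := by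
    intro x x' f g h
    rw [hnat f, hnat g, h]
  -- F on unit components
  have hFu : ∀ c : C, P.F.map (u.hom.app c) = ε.inv.app (P.F.obj c) := by
    intro c
    rw [← cancel_mono (ε.hom.app (P.F.obj c)), tri c, Iso.inv_hom_id_app]
    rfl
  have hFuinv : ∀ c : C, P.F.map (u.inv.app c) = ε.hom.app (P.F.obj c) := by
    intro c
    rw [← cancel_epi (P.F.map (u.hom.app c)), ← P.F.map_comp, u.hom_inv_id_app, P.F.map_id,
      hFu, Iso.inv_hom_id_app]
    rfl
  -- F on G of morphisms
  have hFG : ∀ {y y' : D} (h : y ⟶ y'),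
      P.F.map (G.map h) = ε.hom.app y ≫ h ≫ ε.inv.app y' := by
    intro y y' h
    have hh := ε.hom.naturality h
    simp only [Functor.id_map, Functor.comp_map] at hh
    rw [← Category.assoc, ← hh]
    simp
  -- F on d₁ of morphisms, via the involutive structure of P
  have hFd : ∀ {x x' : C} (f : x ⟶ x'),
      P.F.map (A₁.dMap f) = (P.φ x').hom ≫ A₂.dMap (P.F.map f) ≫ (P.φ x).inv := by
    intro x x' f
    rw [← Category.assoc, ← P.φ_natural f]
    simp
  -- cancellation lemmas for d₂ of isomorphism components
  have dcε : ∀ (y : D) {z : D} (g : A₂.dObj y ⟶ z),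
      A₂.dMap (ε.hom.app y) ≫ A₂.dMap (ε.inv.app y) ≫ g = g := by
    intro y z g
    rw [← Category.assoc, ← A₂.dMap_comp, Iso.inv_hom_id_app]
    simp [A₂.dMap_id]
  have dcε' : ∀ (y : D) {z : D} (g : A₂.dObj (P.F.obj (G.obj y)) ⟶ z),
      A₂.dMap (ε.inv.app y) ≫ A₂.dMap (ε.hom.app y) ≫ g = g := by
    intro y z g
    rw [← Category.assoc, ← A₂.dMap_comp, Iso.hom_inv_id_app]
    simp [A₂.dMap_id]
  have dcφ : ∀ (x : C) {z : D} (g : A₂.dObj (A₂.dObj (P.F.obj x)) ⟶ z),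
      A₂.dMap (P.φ x).hom ≫ A₂.dMap (P.φ x).inv ≫ g = g := by
    intro x z g
    rw [← Category.assoc, ← A₂.dMap_comp, Iso.inv_hom_id]
    simp [A₂.dMap_id]
  have dcφ' : ∀ (x : C) {z : D} (g : A₂.dObj (P.F.obj (A₁.dObj x)) ⟶ z),
      A₂.dMap (P.φ x).inv ≫ A₂.dMap (P.φ x).hom ≫ g = g := by
    intro x z g
    rw [← Category.assoc, ← A₂.dMap_comp, Iso.hom_inv_id]
    simp [A₂.dMap_id]
  -- coherence of P, trailing form
  have hco : ∀ (x : C) {z : D} (g : A₂.dObj (P.F.obj (A₁.dObj x)) ⟶ z),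
      P.F.map (A₁.η x).hom ≫ (P.φ (A₁.dObj x)).hom ≫ g =
      (A₂.η (P.F.obj x)).hom ≫ A₂.dMap (P.φ x).hom ≫ g := by
    intro x z g
    rw [← Category.assoc, ← P.φ_coh x, Category.assoc]
  -- naturality of η₂ at counit components, trailing form
  have hηε : ∀ (y : D) {z : D} (g : A₂.dObj (A₂.dObj y) ⟶ z),
      (A₂.η (P.F.obj (G.obj y))).hom ≫ A₂.dMap (A₂.dMap (ε.hom.app y)) ≫ g =
      ε.hom.app y ≫ (A₂.η y).hom ≫ g := by
    intro y z g
    have h := A₂.η_natural (ε.hom.app y)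
    dsimp only [Functor.comp_obj, Functor.id_obj] at h
    rw [← Category.assoc, ← h, Category.assoc]
  refine ⟨⟨G, fun y => G.mapIso (A₂.dIso (ε.app y)) ≪≫ G.mapIso (P.φ (G.obj y)).symm ≪≫
      (u.app (A₁.dObj (G.obj y))).symm, ?_, ?_⟩, u.symm, ε, ?_, ?_⟩
  · intro y y' f
    apply hfaith
    simp only [Iso.trans_hom, Functor.mapIso_hom, Iso.symm_hom, Iso.app_hom, Iso.app_inv,
      AntiInv.dIso, Functor.map_comp, hFG, hFuinv, hFu, hFd, A₂.dMap_comp, Category.assoc,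
      Category.comp_id, Category.id_comp, Iso.hom_inv_id_app_assoc, Iso.inv_hom_id_app_assoc,
      Iso.hom_inv_id_app, Iso.inv_hom_id_app, Iso.hom_inv_id_assoc, Iso.inv_hom_id_assoc,
      Iso.hom_inv_id, Iso.inv_hom_id, dcε, dcε', dcφ, dcφ', hco, hηε, Functor.id_obj, Functor.comp_obj, A₂.dMap_id, A₁.dMap_id]
  · intro y
    apply hfaith
    simp only [Iso.trans_hom, Functor.mapIso_hom, Iso.symm_hom, Iso.app_hom, Iso.app_inv,
      AntiInv.dIso, Functor.map_comp, hFG, hFuinv, hFu, hFd, A₂.dMap_comp, Category.assoc,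
      Category.comp_id, Category.id_comp, Iso.hom_inv_id_app_assoc, Iso.inv_hom_id_app_assoc,
      Iso.hom_inv_id_app, Iso.inv_hom_id_app, Iso.hom_inv_id_assoc, Iso.inv_hom_id_assoc,
      Iso.hom_inv_id, Iso.inv_hom_id, dcε, dcε', dcφ, dcφ', hco, hηε, Functor.id_obj, Functor.comp_obj, A₂.dMap_id, A₁.dMap_id]
  · intro x
    apply hfaith
    simp only [Iso.trans_hom, Functor.mapIso_hom, Iso.symm_hom, Iso.app_hom, Iso.app_inv,
      AntiInv.dIso, Functor.map_comp, hFG, hFuinv, hFu, hFd, A₂.dMap_comp, Category.assoc,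
      Category.comp_id, Category.id_comp, Iso.hom_inv_id_app_assoc, Iso.inv_hom_id_app_assoc,
      Iso.hom_inv_id_app, Iso.inv_hom_id_app, Iso.hom_inv_id_assoc, Iso.inv_hom_id_assoc,
      Iso.hom_inv_id, Iso.inv_hom_id, dcε, dcε', dcφ, dcφ', hco, hηε, Functor.id_obj, Functor.comp_obj, A₂.dMap_id, A₁.dMap_id, Functor.comp_map,
      Functor.id_map, Functor.map_id]
  · intro y
    simp only [Iso.trans_hom, Functor.mapIso_hom, Iso.symm_hom, Iso.app_hom, Iso.app_inv,
      AntiInv.dIso, Functor.map_comp, hFG, hFuinv, hFu, hFd, A₂.dMap_comp, Category.assoc,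
      Category.comp_id, Category.id_comp, Iso.hom_inv_id_app_assoc, Iso.inv_hom_id_app_assoc,
      Iso.hom_inv_id_app, Iso.inv_hom_id_app, Iso.hom_inv_id_assoc, Iso.inv_hom_id_assoc,
      Iso.hom_inv_id, Iso.inv_hom_id, dcε, dcε', dcφ, dcφ', hco, hηε, Functor.id_obj, Functor.comp_obj, A₂.dMap_id, A₁.dMap_id, Functor.comp_map,
      Functor.id_map, Functor.map_id]

/-- an involutive functor is an equivalence in the 2-category of anti-involutive
categories iff its underlying functor is an equivalence of categories. -/
theorem stmt3 (A₁ : AntiInv C) (A₂ : AntiInv D) (P : InvolFunctor A₁ A₂) :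
    (∃ (Q : InvolFunctor A₂ A₁) (α : P.F ⋙ Q.F ≅ 𝟭 C) (β : Q.F ⋙ P.F ≅ 𝟭 D),
      InvolCond A₁ A₁ (F := P.F ⋙ Q.F) (G := 𝟭 C)
        (fun x => Q.F.map (P.φ x).hom ≫ (Q.φ (P.F.obj x)).hom)
        (fun x => 𝟙 (A₁.dObj x)) α.hom ∧
      InvolCond A₂ A₂ (F := Q.F ⋙ P.F) (G := 𝟭 D)
        (fun y => P.F.map (Q.φ y).hom ≫ (P.φ (Q.F.obj y)).hom)
        (fun y => 𝟙 (A₂.dObj y)) β.hom) ↔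
    P.F.IsEquivalence := by
  constructor
  · rintro ⟨Q, α, β, -, -⟩
    exact (CategoryTheory.Equivalence.mk P.F Q.F α.symm β).isEquivalence_functor
  · intro h
    exact invol_equiv_aux A₁ A₂ P P.F.asEquivalence.inverse P.F.asEquivalence.unitIso
      P.F.asEquivalence.counitIso P.F.asEquivalence.functor_unit_comp
end

section
/- For an anti-involutive category (C, d, η), the Hermitian completion Herm(C) — objects Hermitian fixed points (c, h) and morphisms all morphisms of C, with f† := h₁⁻¹ ∘ d(f) ∘ h₂ — is a dagger category: the adjoint operation is identity-on-objects, contravariantly functorial, and satisfies f†† = f. -/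
open CategoryTheory

universe v u v₂ u₂ v₃ u₃

variable {C : Type u} [Category.{v} C] {D : Type u₂} [Category.{v₂} D] {E : Type u₃} [Category.{v₃} E]

/-- the Hermitian completion with `f† = h₁⁻¹ ∘ d(f) ∘ h₂` is a dagger
category: the adjoint is identity-on-objects contravariantly functorial and involutive. -/
theorem stmt6 (A : AntiInv C) :
    (∀ X : HermObj A, hermDag A (𝟙 X) = 𝟙 X) ∧
    (∀ (X Y Z : HermObj A) (f : X ⟶ Y) (g : Y ⟶ Z),
      hermDag A (f ≫ g) = hermDag A g ≫ hermDag A f) ∧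
    (∀ (X Y : HermObj A) (f : X ⟶ Y), hermDag A (hermDag A f) = f) :=
  ⟨(hermDaggerStruct A).dag_id, fun _ _ _ => (hermDaggerStruct A).dag_comp,
   fun _ _ => (hermDaggerStruct A).dag_dag⟩
end

section
/- For anti-involutive categories (C, d_C, η_C) and (D, d_D, η_D), the functor category Fun(C, D) carries an anti-involution given by d(F) := d_D ∘ F ∘ d_C on objects and whiskering on natural transformations, with η given componentwise by η_D ∗ id_F ∗ η_C; this satisfies the coherence condition that η_{dF} and d(η_F) are mutually inverse. -/
open CategoryTheory

universe v u v₂ u₂ v₃ u₃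

variable {C : Type u} [Category.{v} C] {D : Type u₂} [Category.{v₂} D] {E : Type u₃} [Category.{v₃} E]

theorem AntiInv.dMap_η_inv (A : AntiInv C) (c : C) :
    A.dMap (A.η c).inv = (A.η (A.dObj c)).hom := by
  have h : A.dMap (A.η c).inv ≫ A.dMap (A.η c).hom = 𝟙 _ := by
    rw [← A.dMap_comp, Iso.hom_inv_id, A.dMap_id]
  rw [A.η_coh] at h
  calc A.dMap (A.η c).inv
      = A.dMap (A.η c).inv ≫ (A.η (A.dObj c)).inv ≫ (A.η (A.dObj c)).hom := by simp
    _ = (A.η (A.dObj c)).hom := by rw [← Category.assoc, h, Category.id_comp]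

/-- the functor category carries an anti-involution `d(F) = d_D ∘ F ∘ d_C`
with `η = η_D ∗ id ∗ η_C`, satisfying functoriality, naturality and coherence. -/
theorem stmt9 (A₁ : AntiInv C) (A₂ : AntiInv D) :
    (∀ F : C ⥤ D, dNat A₁ A₂ (𝟙 F) = 𝟙 (dFun A₁ A₂ F)) ∧
    (∀ (F G H : C ⥤ D) (α : F ⟶ G) (β : G ⟶ H),
      dNat A₁ A₂ (α ≫ β) = dNat A₁ A₂ β ≫ dNat A₁ A₂ α) ∧
    (∀ (F : C ⥤ D) {x y : C} (f : x ⟶ y),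
      F.map f ≫ ηApp A₁ A₂ F y = ηApp A₁ A₂ F x ≫ (dFun A₁ A₂ (dFun A₁ A₂ F)).map f) ∧
    (∀ (F G : C ⥤ D) (α : F ⟶ G) (c : C),
      α.app c ≫ ηApp A₁ A₂ G c = ηApp A₁ A₂ F c ≫ (dNat A₁ A₂ (dNat A₁ A₂ α)).app c) ∧
    (∀ (F : C ⥤ D) (c : C), IsIso (ηApp A₁ A₂ F c)) ∧
    (∀ (F : C ⥤ D) (c : C),
      ηApp A₁ A₂ (dFun A₁ A₂ F) c ≫ A₂.dMap (ηApp A₁ A₂ F (A₁.dObj c)) =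
        𝟙 ((dFun A₁ A₂ F).obj c)) ∧
    (∀ (F : C ⥤ D) (c : C),
      A₂.dMap (ηApp A₁ A₂ F (A₁.dObj c)) ≫ ηApp A₁ A₂ (dFun A₁ A₂ F) c =
        𝟙 ((dFun A₁ A₂ (dFun A₁ A₂ (dFun A₁ A₂ F))).obj c)) := by
  refine ⟨?_, ?_, ?_, ?_, ?_, ?_, ?_⟩
  · intro F
    ext c
    simp [dNat, dFun, A₂.dMap_id]
  · intro F G H α β
    ext c
    simp [dNat, A₂.dMap_comp]
    rfl
  · intro F x y f
    dsimp [ηApp, dFun]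
    rw [← Category.assoc, ← F.map_comp, A₁.η_natural, F.map_comp, Category.assoc,
      A₂.η_natural, Category.assoc]
  · intro F G α c
    dsimp [ηApp, dNat, dFun]
    rw [← Category.assoc, ← α.naturality, Category.assoc, A₂.η_natural, Category.assoc]
  · intro F c
    dsimp [ηApp]
    exact Iso.isIso_hom (F.mapIso (A₁.η c) ≪≫ A₂.η _)
  · intro F c
    dsimp [ηApp, dFun]
    rw [A₂.dMap_comp, A₁.η_coh, A₂.η_coh]
    simp only [Category.assoc]
    calc A₂.dMap (F.map (A₁.η (A₁.dObj c)).inv) ≫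
          (A₂.η (A₂.dObj (F.obj (A₁.dObj (A₁.dObj (A₁.dObj c)))))).hom ≫
          (A₂.η (A₂.dObj (F.obj (A₁.dObj (A₁.dObj (A₁.dObj c)))))).inv ≫
          A₂.dMap (F.map (A₁.η (A₁.dObj c)).hom)
        = A₂.dMap (F.map (A₁.η (A₁.dObj c)).inv) ≫ A₂.dMap (F.map (A₁.η (A₁.dObj c)).hom) := by
          simp
      _ = 𝟙 _ := by
          rw [← A₂.dMap_comp, ← F.map_comp, Iso.hom_inv_id, F.map_id, A₂.dMap_id]
  · intro F c
    dsimp [ηApp, dFun]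
    rw [A₂.dMap_comp, A₁.η_coh, A₂.η_coh]
    calc ((A₂.η (A₂.dObj (F.obj (A₁.dObj (A₁.dObj (A₁.dObj c)))))).inv ≫
          A₂.dMap (F.map (A₁.η (A₁.dObj c)).hom)) ≫
          A₂.dMap (F.map (A₁.η (A₁.dObj c)).inv) ≫
          (A₂.η (A₂.dObj (F.obj (A₁.dObj (A₁.dObj (A₁.dObj c)))))).hom
        = (A₂.η (A₂.dObj (F.obj (A₁.dObj (A₁.dObj (A₁.dObj c)))))).inv ≫
          (A₂.dMap (F.map (A₁.η (A₁.dObj c)).hom) ≫ A₂.dMap (F.map (A₁.η (A₁.dObj c)).inv)) ≫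
          (A₂.η (A₂.dObj (F.obj (A₁.dObj (A₁.dObj (A₁.dObj c)))))).hom := by
          simp only [Category.assoc]
      _ = 𝟙 _ := by
          rw [← A₂.dMap_comp, ← F.map_comp, Iso.inv_hom_id, F.map_id, A₂.dMap_id,
            Category.id_comp, Iso.inv_hom_id]
end

section
/- For an involutive functor (F, φ): C → D between anti-involutive categories, the assignment (c, h) ↦ (F(c), φ_c ∘ F(h)), f ↦ F(f), defines a dagger functor Herm(F): Herm(C) → Herm(D); in particular φ_c ∘ F(h) is a Hermitian fixed point on F(c) and Herm(F) preserves adjoints. -/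
open CategoryTheory

universe v u v₂ u₂ v₃ u₃

variable {C : Type u} [Category.{v} C] {D : Type u₂} [Category.{v₂} D] {E : Type u₃} [Category.{v₃} E]

/-- `Herm(F)(c,h) = (F c, φ_c ∘ F h)` defines a dagger functor: the new
structure is a Hermitian fixed point, and adjoints are preserved. -/
theorem stmt11 (A₁ : AntiInv C) (A₂ : AntiInv D) (P : InvolFunctor A₁ A₂) :
    (∀ X : HermObj A₁,
      (A₂.η (P.F.obj X.c)).hom ≫ A₂.dMap (P.F.map X.h.hom ≫ (P.φ X.c).hom) =
        P.F.map X.h.hom ≫ (P.φ X.c).hom) ∧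
    (∀ (X Y : HermObj A₁) (f : X ⟶ Y),
      P.F.map ((hermDag A₁ f : Y.c ⟶ X.c)) =
        (P.F.map Y.h.hom ≫ (P.φ Y.c).hom) ≫ A₂.dMap (P.F.map (f : X.c ⟶ Y.c)) ≫
          (P.φ X.c).inv ≫ P.F.map X.h.inv) := by
  constructor
  · intro X
    rw [A₂.dMap_comp, ← Category.assoc, P.φ_coh, Category.assoc, ← P.φ_natural,
      ← Category.assoc, ← P.F.map_comp, X.fix]
  · intro X Y f
    have h : P.F.map (A₁.dMap (f : X.c ⟶ Y.c)) =
        (P.φ Y.c).hom ≫ A₂.dMap (P.F.map (f : X.c ⟶ Y.c)) ≫ (P.φ X.c).inv := by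
      rw [← Category.assoc, ← P.φ_natural]; simp
    show P.F.map ((Y.h.hom ≫ A₁.dMap (f : X.c ⟶ Y.c) ≫ X.h.inv : Y.c ⟶ X.c)) = _
    rw [P.F.map_comp, P.F.map_comp, h]
    simp
end

section
/- For any anti-involutive category (C, d, η), the dagger category Herm(C) is indefinite: every self-adjoint automorphism a of an object (c, h) can be written as f† ∘ f for some isomorphism f out of (c, h); concretely one may take f = id_c: (c, h) → (c, h ∘ a), where h ∘ a is again a Hermitian fixed point. -/
open CategoryTheory

universe v u v₂ u₂ v₃ u₃

variable {C : Type u} [Category.{v} C] {D : Type u₂} [Category.{v₂} D] {E : Type u₃} [Category.{v₃} E]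

/-- `Herm(C)` is indefinite: every self-adjoint automorphism `a` of `(c,h)` is
`f† ∘ f` for an isomorphism `f`; concretely `h ∘ a` is again a Hermitian fixed point. -/
theorem stmt13 (A : AntiInv C) (X : HermObj A) (a : X ⟶ X)
    (ha : IsIso a) (hsa : hermDag A a = a) :
    (IsIso ((show X.c ⟶ X.c from a) ≫ X.h.hom) ∧
      (A.η X.c).hom ≫ A.dMap ((show X.c ⟶ X.c from a) ≫ X.h.hom) = (show X.c ⟶ X.c from a) ≫ X.h.hom) ∧
    (∃ (Y : HermObj A) (f : X ⟶ Y), IsIso f ∧ f ≫ hermDag A f = a) := by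
  have aC : X.c ⟶ X.c := a
  -- unfold hsa
  have hd : A.dMap (show X.c ⟶ X.c from a) = X.h.inv ≫ (show X.c ⟶ X.c from a) ≫ X.h.hom := by
    have := hsa
    unfold hermDag at this
    conv_rhs => rw [← this]
    simp
  -- a is iso in C
  obtain ⟨b, hb1, hb2⟩ := ha.out
  have hbC : (show X.c ⟶ X.c from a) ≫ (show X.c ⟶ X.c from b) = 𝟙 X.c := hb1
  have hbC' : (show X.c ⟶ X.c from b) ≫ (show X.c ⟶ X.c from a) = 𝟙 X.c := hb2
  have hIso : IsIso ((show X.c ⟶ X.c from a) ≫ X.h.hom) := by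
    refine ⟨X.h.inv ≫ (show X.c ⟶ X.c from b), ?_, ?_⟩
    · rw [Category.assoc, Iso.hom_inv_id_assoc, hbC]
    · rw [Category.assoc, ← Category.assoc (show X.c ⟶ X.c from b), hbC',
        Category.id_comp, Iso.inv_hom_id]
  have hfix : (A.η X.c).hom ≫ A.dMap ((show X.c ⟶ X.c from a) ≫ X.h.hom)
      = (show X.c ⟶ X.c from a) ≫ X.h.hom := by
    rw [A.dMap_comp, HermObj.dMap_hom, hd]
    simp
  refine ⟨⟨hIso, hfix⟩, ?_⟩
  refine ⟨⟨X.c, ⟨(show X.c ⟶ X.c from a) ≫ X.h.hom, X.h.inv ≫ (show X.c ⟶ X.c from b), ?_, ?_⟩, hfix⟩,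
    (show X.c ⟶ X.c from 𝟙 X.c), ⟨𝟙 X.c, ?_, ?_⟩, ?_⟩
  · rw [Category.assoc, Iso.hom_inv_id_assoc, hbC]
  · rw [Category.assoc, ← Category.assoc (show X.c ⟶ X.c from b), hbC',
      Category.id_comp, Iso.inv_hom_id]
  · show 𝟙 X.c ≫ 𝟙 X.c = 𝟙 X.c; simp
  · show 𝟙 X.c ≫ 𝟙 X.c = 𝟙 X.c; simp
  · show 𝟙 X.c ≫ (((show X.c ⟶ X.c from a) ≫ X.h.hom) ≫ A.dMap (𝟙 X.c) ≫ X.h.inv) = a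
    rw [A.dMap_id]
    simp
end

section
/- For a dagger category (D, †), the canonical dagger functor U: D → Herm(T(D)) sending x to (x, id_x) is a dagger equivalence if and only if D is indefinite. -/
open CategoryTheory

universe v u v₂ u₂ v₃ u₃

variable {C : Type u} [Category.{v} C] {D : Type u₂} [Category.{v₂} D] {E : Type u₃} [Category.{v₃} E]

/-- `U : D → Herm(T(D))` is a dagger equivalence (fully faithful and
surjective up to unitaries) iff `D` is indefinite. -/
theorem stmt14 (DC : DaggerStruct C) :
    ((Ufun DC).Full ∧ (Ufun DC).Faithful ∧
      ∀ Y : HermObj DC.toAntiInv,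
        ∃ (x : C) (u : (Ufun DC).obj x ⟶ Y), HermUnitary DC.toAntiInv u) ↔
    DC.Indefinite := by
  constructor
  · rintro ⟨-, -, hsurj⟩
    intro x a ha hsa
    have hfix : ((DC.toAntiInv).η x).hom ≫ (DC.toAntiInv).dMap (asIso a).hom
        = (asIso a).hom := by
      simp [DaggerStruct.toAntiInv, hsa]
    obtain ⟨z, u, hu1, hu2⟩ := hsurj ⟨x, @asIso _ _ _ _ a ha, hfix⟩
    let u' : z ⟶ x := u
    -- unitarity unfolded in C
    have e1 : u' ≫ a ≫ DC.dag u' ≫ 𝟙 z = 𝟙 z := hu1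
    have e2 : (a ≫ DC.dag u' ≫ 𝟙 z) ≫ u' = 𝟙 x := hu2
    rw [Category.comp_id] at e1 e2
    refine ⟨z, a ≫ DC.dag u', ⟨⟨u', e2, e1⟩⟩, ?_⟩
    have hdag : DC.dag (a ≫ DC.dag u') = u' ≫ a := by
      rw [DC.dag_comp, DC.dag_dag, hsa]
    rw [hdag, ← Category.assoc, e2, Category.id_comp]
  · intro hind
    refine ⟨⟨fun {x y} f => ⟨f, rfl⟩⟩, ⟨fun {x y} f g h => h⟩, ?_⟩
    intro Y
    let b : Y.c ⟶ Y.c := Y.h.hom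
    let binv : Y.c ⟶ Y.c := Y.h.inv
    have hbi1 : b ≫ binv = 𝟙 Y.c := Y.h.hom_inv_id
    have hbi2 : binv ≫ b = 𝟙 Y.c := Y.h.inv_hom_id
    have hself : DC.dag b = b := by
      have h : 𝟙 Y.c ≫ DC.dag b = b := Y.fix
      rwa [Category.id_comp] at h
    have hselfinv : DC.dag binv = binv := by
      have h1 : b ≫ DC.dag binv = 𝟙 Y.c := by
        rw [← hself, ← DC.dag_comp, hbi2, DC.dag_id]
      calc DC.dag binv = binv ≫ (b ≫ DC.dag binv) := by
            rw [← Category.assoc, hbi2, Category.id_comp]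
        _ = binv := by rw [h1, Category.comp_id]
    have hinviso : IsIso binv := ⟨⟨b, hbi2, hbi1⟩⟩
    obtain ⟨z, f, hfiso, hf⟩ := hind Y.c binv hinviso hselfinv
    refine ⟨z, DC.dag f, ?_, ?_⟩
    · -- u ≫ hermDag u = 𝟙
      show DC.dag f ≫ b ≫ DC.dag (DC.dag f) ≫ 𝟙 z = 𝟙 z
      rw [Category.comp_id, DC.dag_dag]
      have key : f ≫ DC.dag f ≫ b ≫ f = f := by
        rw [← Category.assoc, ← Category.assoc, hf, hbi2, Category.id_comp]
      calc DC.dag f ≫ b ≫ f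
          = inv f ≫ f ≫ DC.dag f ≫ b ≫ f := by
            rw [IsIso.inv_hom_id_assoc]
        _ = 𝟙 z := by rw [key, IsIso.inv_hom_id]
    · -- hermDag u ≫ u = 𝟙
      show (b ≫ DC.dag (DC.dag f) ≫ 𝟙 z) ≫ DC.dag f = 𝟙 Y.c
      rw [Category.comp_id, DC.dag_dag, Category.assoc, hf, hbi1]
end
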